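/- arXiv:1911.01195 — 2 statements merged into one kernel-verified Lean document; each statement's English description precedes it below -/
import Mathlib

section
/- In the gadget G_k with n tokens, for every n ∈ ℕ there exists a capacity word w over {a₁,b₁,...,a_k,b_k} and a flow word f ≤ w such that n·s goes to n·t_k. Moreover, the explicit word a_k(a_{k-1}(⋯(a₁b₁)^{n-k+1}⋯)^{n-2} b_{k-1})^{n-1} b_k takes n·s to (n-1)·s + t_k. -/
/-- States of the gadget `G_k`: the source `s`, and states `r i`, `t i` for
`i : Fin k` (0-indexed versions of `r₁,…,r_k` and `t₁,…,t_k`). -/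
abbrev GSt (k : ℕ) := Unit ⊕ Fin k ⊕ Fin k

def gS (k : ℕ) : GSt k := Sum.inl ()
def gR {k : ℕ} (i : Fin k) : GSt k := Sum.inr (Sum.inl i)
def gT {k : ℕ} (i : Fin k) : GSt k := Sum.inr (Sum.inr i)

/-- `r i` for a natural number index (defaulting to `s` out of range). -/
def gRn (k i : ℕ) : GSt k := if h : i < k then gR ⟨i, h⟩ else gS k

/-- `t i` for a natural number index (defaulting to `s` out of range). -/
def gTn (k i : ℕ) : GSt k := if h : i < k then gT ⟨i, h⟩ else gS k

/-- `t_{i-1}`, with `t₀` identified with `s` (0-indexed: predecessor of `i`). -/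
def prevT (k i : ℕ) : GSt k := if i = 0 then gS k else gTn k (i - 1)

open Classical in
/-- The capacity `a_i` (0-indexed `i`). -/
noncomputable def capA (k i : ℕ) : GSt k × GSt k → ℕ∞ := fun e =>
  if e.1 = e.2 ∧ (e.1 = gS k ∨ ∃ j : Fin k, i ≤ (j : ℕ) ∧ e.1 = gT j) then ⊤
  else if (e.1 = e.2 ∧ ∃ j : Fin k, i < (j : ℕ) ∧ e.1 = gR j) ∨
          (e.1 = gS k ∧ e.2 = gRn k i) then 1
  else 0

open Classical in
/-- The capacity `b_i` (0-indexed `i`). -/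
noncomputable def capB (k i : ℕ) : GSt k × GSt k → ℕ∞ := fun e =>
  if (e.1 = e.2 ∧ ∃ j : Fin k, i ≤ (j : ℕ) ∧ e.1 = gT j) ∨
     (e.1 = prevT k i ∧ e.2 = gS k) then ⊤
  else if (e.1 = e.2 ∧ ∃ j : Fin k, i < (j : ℕ) ∧ e.1 = gR j) ∨
          (e.1 = gRn k i ∧ e.2 = gTn k i) then 1
  else 0

def preFlow {k : ℕ} (f : GSt k × GSt k → ℕ) : GSt k → ℕ := fun p => ∑ y, f (p, y)

def postFlow {k : ℕ} (f : GSt k × GSt k → ℕ) : GSt k → ℕ := fun y => ∑ p, f (p, y)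

inductive GoesTo {k : ℕ} :
    List (GSt k × GSt k → ℕ) → (GSt k → ℕ) → (GSt k → ℕ) → Prop
  | nil (c : GSt k → ℕ) : GoesTo [] c c
  | cons {f : GSt k × GSt k → ℕ} {fs : List (GSt k × GSt k → ℕ)} {c c₁ c' : GSt k → ℕ} :
      c = preFlow f → c₁ = postFlow f → GoesTo fs c₁ c' → GoesTo (f :: fs) c c'

/-- A flow respects a capacity. -/
def RespectsCap {k : ℕ} (f : GSt k × GSt k → ℕ) (w : GSt k × GSt k → ℕ∞) : Prop :=
  ∀ e, (f e : ℕ∞) ≤ w e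

/-- The explicit capacity word
`a_k (a_{k-1} ( ⋯ (a₁ b₁)^{n-k+1} ⋯ )^{n-2} b_{k-1})^{n-1} b_k`,
built level by level (`i` is the 0-indexed level). -/
noncomputable def gadgetWord (k n : ℕ) : ℕ → List (GSt k × GSt k → ℕ∞)
  | 0 => [capA k 0, capB k 0]
  | i + 1 =>
      capA k (i + 1) ::
        (List.replicate (n - (k - 1 - i)) (gadgetWord k n i)).flatten ++ [capB k (i + 1)]

namespace S12
variable {k : ℕ}

@[simp] lemma gR_inj {j j' : Fin k} : gR j = gR j' ↔ j = j' := by simp [gR]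
@[simp] lemma gT_inj {j j' : Fin k} : gT j = gT j' ↔ j = j' := by simp [gT]
@[simp] lemma gS_ne_gR {j : Fin k} : gS k ≠ gR j := by simp [gS, gR]
@[simp] lemma gR_ne_gS {j : Fin k} : gR j ≠ gS k := by simp [gS, gR]
@[simp] lemma gS_ne_gT {j : Fin k} : gS k ≠ gT j := by simp [gS, gT]
@[simp] lemma gT_ne_gS {j : Fin k} : gT j ≠ gS k := by simp [gS, gT]
@[simp] lemma gR_ne_gT {j j' : Fin k} : gR j ≠ gT j' := by simp [gR, gT]
@[simp] lemma gT_ne_gR {j j' : Fin k} : gT j ≠ gR j' := by simp [gR, gT]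

lemma gRn_eq {i : ℕ} (h : i < k) : gRn k i = gR ⟨i, h⟩ := dif_pos h
lemma gTn_eq {i : ℕ} (h : i < k) : gTn k i = gT ⟨i, h⟩ := dif_pos h

-- capA evaluation
lemma capA_ss (i : ℕ) : capA k i (gS k, gS k) = ⊤ := by simp [capA]
lemma capA_sr (i : ℕ) (j : Fin k) :
    capA k i (gS k, gR j) = if (j : ℕ) = i then 1 else 0 := by
  simp only [capA, gRn]
  split_ifs with h1 h2 h3 h2 h3 <;> (try simp_all) <;> (try simp_all [Fin.ext_iff]) <;> omega
lemma capA_st (i : ℕ) (j : Fin k) : capA k i (gS k, gT j) = 0 := by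
  simp only [capA, gRn]
  split_ifs with h1 h2 <;> simp_all
lemma capA_rr (i : ℕ) (j j' : Fin k) :
    capA k i (gR j, gR j') = if j = j' ∧ i < (j : ℕ) then 1 else 0 := by
  simp only [capA, gRn]
  split_ifs with h1 h2 h3 h2 h3 <;> (try simp_all) <;> (try simp_all [Fin.ext_iff]) <;> omega
lemma capA_rs (i : ℕ) (j : Fin k) : capA k i (gR j, gS k) = 0 := by
  simp only [capA, gRn]; split_ifs with h1 h2 <;> simp_all
lemma capA_rt (i : ℕ) (j j' : Fin k) : capA k i (gR j, gT j') = 0 := by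
  simp only [capA, gRn]; split_ifs with h1 h2 <;> simp_all
lemma capA_ts (i : ℕ) (j : Fin k) : capA k i (gT j, gS k) = 0 := by
  simp only [capA, gRn]; split_ifs with h1 h2 <;> simp_all
lemma capA_tr (i : ℕ) (j j' : Fin k) : capA k i (gT j, gR j') = 0 := by
  simp only [capA, gRn]; split_ifs with h1 h2 <;> simp_all
lemma capA_tt (i : ℕ) (j j' : Fin k) :
    capA k i (gT j, gT j') = if j = j' ∧ i ≤ (j : ℕ) then ⊤ else 0 := by
  simp only [capA, gRn]
  split_ifs with h1 h2 h3 h2 h3 <;> (try simp_all) <;> (try simp_all [Fin.ext_iff]) <;> omega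


-- capB evaluation (all with i < k)
lemma capB_ss {i : ℕ} (hik : i < k) : capB k i (gS k, gS k) = if i = 0 then ⊤ else 0 := by
  simp only [capB, gRn, gTn, prevT]
  split_ifs <;> (try simp_all) <;> (try simp_all [Fin.ext_iff]) <;> omega
lemma capB_sr {i : ℕ} (hik : i < k) (j : Fin k) : capB k i (gS k, gR j) = 0 := by
  simp only [capB, gRn, gTn, prevT]
  split_ifs <;> (try simp_all) <;> (try simp_all [Fin.ext_iff]) <;> omega
lemma capB_st {i : ℕ} (hik : i < k) (j : Fin k) : capB k i (gS k, gT j) = 0 := by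
  simp only [capB, gRn, gTn, prevT]
  split_ifs <;> (try simp_all) <;> (try simp_all [Fin.ext_iff]) <;> omega
lemma capB_rs {i : ℕ} (hik : i < k) (j : Fin k) : capB k i (gR j, gS k) = 0 := by
  simp only [capB, gRn, gTn, prevT]
  split_ifs <;> (try simp_all) <;> (try simp_all [Fin.ext_iff]) <;> omega
lemma capB_rr {i : ℕ} (hik : i < k) (j j' : Fin k) :
    capB k i (gR j, gR j') = if j = j' ∧ i < (j : ℕ) then 1 else 0 := by
  simp only [capB, gRn, gTn, prevT]
  split_ifs <;> (try simp_all) <;> (try simp_all [Fin.ext_iff]) <;> omega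
lemma capB_rt {i : ℕ} (hik : i < k) (j j' : Fin k) :
    capB k i (gR j, gT j') = if (j : ℕ) = i ∧ (j' : ℕ) = i then 1 else 0 := by
  simp only [capB, gRn, gTn, prevT]
  split_ifs <;> (try simp_all) <;> (try simp_all [Fin.ext_iff]) <;> omega
lemma capB_ts {i : ℕ} (hik : i < k) (j : Fin k) :
    capB k i (gT j, gS k) = if i ≠ 0 ∧ (j : ℕ) = i - 1 then ⊤ else 0 := by
  simp only [capB, gRn, gTn, prevT]
  split_ifs <;> (try simp_all) <;> (try simp_all [Fin.ext_iff]) <;> omega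
lemma capB_tr {i : ℕ} (hik : i < k) (j j' : Fin k) : capB k i (gT j, gR j') = 0 := by
  simp only [capB, gRn, gTn, prevT]
  split_ifs <;> (try simp_all) <;> (try simp_all [Fin.ext_iff]) <;> omega
lemma capB_tt {i : ℕ} (hik : i < k) (j j' : Fin k) :
    capB k i (gT j, gT j') = if j = j' ∧ i ≤ (j : ℕ) then ⊤ else 0 := by
  simp only [capB, gRn, gTn, prevT]
  split_ifs <;> (try simp_all) <;> (try simp_all [Fin.ext_iff]) <;> omega



def diagFlow (c : GSt k → ℕ) : GSt k × GSt k → ℕ := fun e => if e.1 = e.2 then c e.1 else 0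

def moveFlow (x y : GSt k) (c : GSt k → ℕ) : GSt k × GSt k → ℕ :=
  fun e => if e.1 = x then (if e.2 = y then 1 else if e.2 = x then c x - 1 else 0)
           else if e.1 = e.2 then c e.1 else 0

def moveCfg (x y : GSt k) (c : GSt k → ℕ) : GSt k → ℕ :=
  fun z => if z = x then c x - 1 else if z = y then c y + 1 else c z

def bFlow (i : ℕ) (c : GSt k → ℕ) : GSt k × GSt k → ℕ :=
  fun e => if e.1 = gTn k i then (if e.2 = gS k then c e.1 else 0)
           else if e.1 = gRn k (i+1) then (if e.2 = gTn k (i+1) then c e.1 else 0)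
           else if e.1 = e.2 then c e.1 else 0

def bCfg (i : ℕ) (c : GSt k → ℕ) : GSt k → ℕ := fun y =>
  (if y = gS k then c (gTn k i) else 0) + (if y = gTn k (i+1) then c (gRn k (i+1)) else 0)
    + (if y = gTn k i ∨ y = gRn k (i+1) then 0 else c y)

lemma sum_pt (x : GSt k) (g : GSt k → ℕ) : (∑ y : GSt k, if y = x then g y else 0) = g x := by
  rw [Finset.sum_ite_eq' Finset.univ x g]; simp

lemma pre_diag (c : GSt k → ℕ) : preFlow (diagFlow c) = c := by
  funext p
  show (∑ y : GSt k, if p = y then c p else 0) = c p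
  rw [Finset.sum_ite_eq Finset.univ p (fun _ => c p)]; simp

lemma post_diag (c : GSt k → ℕ) : postFlow (diagFlow c) = c := by
  funext q
  show (∑ p : GSt k, if p = q then c p else 0) = c q
  rw [sum_pt]

lemma pre_move {x y : GSt k} (hxy : x ≠ y) (c : GSt k → ℕ) (hc : 1 ≤ c x) :
    preFlow (moveFlow x y c) = c := by
  funext p
  show (∑ q : GSt k, moveFlow x y c (p, q)) = c p
  by_cases hp : p = x
  · have : ∀ q : GSt k, moveFlow x y c (p, q)
        = (if q = y then 1 else 0) + (if q = x then c x - 1 else 0) := by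
      intro q
      simp only [moveFlow, if_pos hp]
      split_ifs with h2 h3 <;> simp_all
    simp only [this]
    rw [Finset.sum_add_distrib, sum_pt, sum_pt, hp]
    omega
  · have : ∀ q : GSt k, moveFlow x y c (p, q) = if q = p then c p else 0 := by
      intro q
      simp only [moveFlow, if_neg hp]
      by_cases h : p = q
      · subst h; simp
      · rw [if_neg h, if_neg (fun hq : q = p => h hq.symm)]
    simp only [this, sum_pt]

lemma post_move {x y : GSt k} (hxy : x ≠ y) (c : GSt k → ℕ) :
    postFlow (moveFlow x y c) = moveCfg x y c := by
  funext q
  show (∑ p : GSt k, moveFlow x y c (p, q)) = moveCfg x y c q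
  have : ∀ p : GSt k, moveFlow x y c (p, q)
      = (if p = x then (if q = y then 1 else if q = x then c x - 1 else 0) else 0)
        + (if p = q then (if q = x then 0 else c q) else 0) := by
    intro p
    simp only [moveFlow]
    by_cases h : p = x
    · subst h
      by_cases h2 : p = q
      · subst h2; simp
      · simp [h2, fun hq : q = p => h2 hq.symm]
    · rw [if_neg h, if_neg h]
      by_cases h2 : p = q
      · subst h2
        simp only [if_pos rfl, zero_add]
        rw [if_neg (fun hq : p = x => h hq)]
      · rw [if_neg h2, if_neg (fun hq : p = q => h2 hq)]
  simp only [this]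
  rw [Finset.sum_add_distrib, sum_pt, sum_pt]
  simp only [moveCfg]
  by_cases h1 : q = x
  · subst h1; simp [hxy, fun h : q = y => hxy h]
  · by_cases h2 : q = y
    · subst h2; simp [h1]; omega
    · simp [h1, h2]

lemma pre_b {i : ℕ} (hik : i + 1 < k) (c : GSt k → ℕ) : preFlow (bFlow i c) = c := by
  have hik' : i < k := by omega
  funext p
  show (∑ q : GSt k, bFlow i c (p, q)) = c p
  by_cases h1 : p = gTn k i
  · have : ∀ q : GSt k, bFlow i c (p, q) = if q = gS k then c p else 0 := by
      intro q; simp only [bFlow, if_pos h1]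
    simp only [this, sum_pt]
  · by_cases h2 : p = gRn k (i+1)
    · have : ∀ q : GSt k, bFlow i c (p, q) = if q = gTn k (i+1) then c p else 0 := by
        intro q; simp only [bFlow, if_neg h1, if_pos h2]
      simp only [this, sum_pt]
    · have : ∀ q : GSt k, bFlow i c (p, q) = if q = p then c p else 0 := by
        intro q; simp only [bFlow, if_neg h1, if_neg h2, eq_comm]
      simp only [this, sum_pt]

lemma post_b {i : ℕ} (hik : i + 1 < k) (c : GSt k → ℕ) : postFlow (bFlow i c) = bCfg i c := by
  have hik' : i < k := by omega
  have hne : gTn k i ≠ gRn k (i+1) := by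
    rw [gTn_eq hik', gRn_eq hik]; simp
  funext q
  show (∑ p : GSt k, bFlow i c (p, q)) = bCfg i c q
  have : ∀ p : GSt k, bFlow i c (p, q)
      = (if p = gTn k i then (if q = gS k then c p else 0) else 0)
        + ((if p = gRn k (i+1) then (if q = gTn k (i+1) then c p else 0) else 0)
        + (if p = q then (if q = gTn k i ∨ q = gRn k (i+1) then 0 else c q) else 0)) := by
    intro p
    simp only [bFlow]
    split_ifs <;> simp_all
  simp only [this]
  rw [Finset.sum_add_distrib, sum_pt, Finset.sum_add_distrib, sum_pt, sum_pt]
  simp [bCfg, add_assoc]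



/-- no tokens on `r j` for `j ≤ i` -/
def CRlo (i : ℕ) (c : GSt k → ℕ) : Prop := ∀ j : Fin k, (j : ℕ) ≤ i → c (gR j) = 0
/-- at most one token on `r j` for `j > i` -/
def CRhi (i : ℕ) (c : GSt k → ℕ) : Prop := ∀ j : Fin k, i < (j : ℕ) → c (gR j) ≤ 1
/-- no tokens on `t j` for `j < i` -/
def CT (i : ℕ) (c : GSt k → ℕ) : Prop := ∀ j : Fin k, (j : ℕ) < i → c (gT j) = 0

lemma enat_le_one {m : ℕ} (h : m ≤ 1) : (m : ℕ∞) ≤ 1 := by exact_mod_cast h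
lemma enat_le_zero {m : ℕ} (h : m = 0) : (m : ℕ∞) ≤ 0 := by exact_mod_cast h.le

lemma cS (u : Unit) : (Sum.inl u : GSt k) = gS k := rfl
lemma cR (j : Fin k) : (Sum.inr (Sum.inl j) : GSt k) = gR j := rfl
lemma cT (j : Fin k) : (Sum.inr (Sum.inr j) : GSt k) = gT j := rfl

lemma resp_move_capA {i : ℕ} (hik : i < k) {c : GSt k → ℕ}
    (hlo : CRlo i c) (hhi : CRhi i c) (ht : CT i c) :
    RespectsCap (moveFlow (gS k) (gRn k i) c) (capA k i) := by
  rintro ⟨p, q⟩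
  rw [gRn_eq hik]
  rcases p with ⟨⟩ | p | p <;> rcases q with ⟨⟩ | q | q <;>
    simp only [cS, cR, cT]
  · rw [capA_ss]; exact le_top
  · rw [capA_sr]
    simp only [moveFlow, if_pos rfl, gR_inj, Fin.ext_iff]
    rw [if_neg (gR_ne_gS (j := q))]
    split_ifs <;> simp_all
  · rw [capA_st]
    simp [moveFlow]
  · rw [capA_rs]
    simp [moveFlow]
  · rw [capA_rr]
    simp only [moveFlow, if_neg (gR_ne_gS (j := p)), gR_inj]
    by_cases h : p = q
    · subst h
      rw [if_pos rfl]
      by_cases h2 : i < (p : ℕ)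
      · rw [if_pos ⟨rfl, h2⟩]; exact enat_le_one (hhi p h2)
      · rw [if_neg (by tauto)]; exact enat_le_zero (hlo p (by omega))
    · rw [if_neg h, if_neg (by tauto)]; exact enat_le_zero rfl
  · rw [capA_rt]
    simp [moveFlow]
  · rw [capA_ts]
    simp [moveFlow]
  · rw [capA_tr]
    simp [moveFlow]
  · rw [capA_tt]
    simp only [moveFlow, if_neg (gT_ne_gS (j := p)), gT_inj]
    by_cases h : p = q
    · subst h
      rw [if_pos rfl]
      by_cases h2 : i ≤ (p : ℕ)
      · rw [if_pos ⟨rfl, h2⟩]; exact le_top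
      · rw [if_neg (by tauto)]; exact enat_le_zero (ht p (by omega))
    · rw [if_neg h, if_neg (by tauto)]; exact enat_le_zero rfl


lemma resp_diag_capA {i : ℕ} (hik : i < k) {c : GSt k → ℕ}
    (hlo : CRlo i c) (hhi : CRhi i c) (ht : CT i c) :
    RespectsCap (diagFlow c) (capA k i) := by
  rintro ⟨p, q⟩
  rcases p with ⟨⟩ | p | p <;> rcases q with ⟨⟩ | q | q <;> simp only [cS, cR, cT]
  · rw [capA_ss]; exact le_top
  · rw [capA_sr]; simp [diagFlow]
  · rw [capA_st]; simp [diagFlow]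
  · rw [capA_rs]; simp [diagFlow]
  · rw [capA_rr]
    simp only [diagFlow, gR_inj]
    by_cases h : p = q
    · subst h; rw [if_pos rfl]
      by_cases h2 : i < (p : ℕ)
      · rw [if_pos ⟨rfl, h2⟩]; exact enat_le_one (hhi p h2)
      · rw [if_neg (by tauto)]; exact enat_le_zero (hlo p (by omega))
    · rw [if_neg h, if_neg (by tauto)]; exact enat_le_zero rfl
  · rw [capA_rt]; simp [diagFlow]
  · rw [capA_ts]; simp [diagFlow]
  · rw [capA_tr]; simp [diagFlow]
  · rw [capA_tt]
    simp only [diagFlow, gT_inj]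
    by_cases h : p = q
    · subst h; rw [if_pos rfl]
      by_cases h2 : i ≤ (p : ℕ)
      · rw [if_pos ⟨rfl, h2⟩]; exact le_top
      · rw [if_neg (by tauto)]; exact enat_le_zero (ht p (by omega))
    · rw [if_neg h, if_neg (by tauto)]; exact enat_le_zero rfl

lemma resp_diag_capB {i : ℕ} (hik : i < k) {c : GSt k → ℕ}
    (hs : i = 0 ∨ c (gS k) = 0) (hlo : CRlo i c) (hhi : CRhi i c) (ht : CT i c) :
    RespectsCap (diagFlow c) (capB k i) := by
  rintro ⟨p, q⟩
  rcases p with ⟨⟩ | p | p <;> rcases q with ⟨⟩ | q | q <;> simp only [cS, cR, cT]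
  · rw [capB_ss hik]
    rcases hs with hs | hs
    · rw [if_pos hs]; exact le_top
    · simp [diagFlow, hs]
  · rw [capB_sr hik]; simp [diagFlow]
  · rw [capB_st hik]; simp [diagFlow]
  · rw [capB_rs hik]; simp [diagFlow]
  · rw [capB_rr hik]
    simp only [diagFlow, gR_inj]
    by_cases h : p = q
    · subst h; rw [if_pos rfl]
      by_cases h2 : i < (p : ℕ)
      · rw [if_pos ⟨rfl, h2⟩]; exact enat_le_one (hhi p h2)
      · rw [if_neg (by tauto)]; exact enat_le_zero (hlo p (by omega))
    · rw [if_neg h, if_neg (by tauto)]; exact enat_le_zero rfl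
  · rw [capB_rt hik]; simp [diagFlow]
  · rw [capB_ts hik]; simp [diagFlow]
  · rw [capB_tr hik]; simp [diagFlow]
  · rw [capB_tt hik]
    simp only [diagFlow, gT_inj]
    by_cases h : p = q
    · subst h; rw [if_pos rfl]
      by_cases h2 : i ≤ (p : ℕ)
      · rw [if_pos ⟨rfl, h2⟩]; exact le_top
      · rw [if_neg (by tauto)]; exact enat_le_zero (ht p (by omega))
    · rw [if_neg h, if_neg (by tauto)]; exact enat_le_zero rfl

lemma resp_move0_capB (hk0 : 0 < k) {c : GSt k → ℕ}
    (hhi : CRhi 0 c) (hr0 : c (gRn k 0) ≤ 1) :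
    RespectsCap (moveFlow (gRn k 0) (gTn k 0) c) (capB k 0) := by
  rw [gRn_eq hk0] at *
  rw [gTn_eq hk0]
  rintro ⟨p, q⟩
  rcases p with ⟨⟩ | p | p <;> rcases q with ⟨⟩ | q | q <;> simp only [cS, cR, cT]
  · rw [capB_ss hk0, if_pos rfl]; exact le_top
  · rw [capB_sr hk0]; simp [moveFlow]
  · rw [capB_st hk0]; simp [moveFlow]
  · rw [capB_rs hk0]; simp [moveFlow]
  · rw [capB_rr hk0]
    simp only [moveFlow, gR_inj]
    by_cases h : p = (⟨0, hk0⟩ : Fin k)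
    · rw [if_pos h, if_neg (gR_ne_gT (j := q))]
      by_cases h2 : q = (⟨0, hk0⟩ : Fin k)
      · rw [if_pos h2, if_neg (by rintro ⟨h1', h2'⟩; rw [h] at h2'; simp at h2')]
        exact enat_le_zero (by omega)
      · rw [if_neg h2, if_neg (by rintro ⟨h1', h2'⟩; rw [h] at h1'; exact h2 (h1'.symm ▸ rfl))]
        exact enat_le_zero rfl
    · rw [if_neg h]
      by_cases h2 : p = q
      · have h3 : 0 < (p : ℕ) := Nat.pos_of_ne_zero (fun h' => h (Fin.ext (by simpa using h')))
        subst h2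
        rw [if_pos rfl, if_pos ⟨rfl, h3⟩]
        exact enat_le_one (hhi p h3)
      · rw [if_neg h2, if_neg (by tauto)]; exact enat_le_zero rfl
  · rw [capB_rt hk0]
    simp only [moveFlow, gR_inj, gT_inj]
    by_cases h : p = (⟨0, hk0⟩ : Fin k)
    · rw [if_pos h]
      by_cases h2 : q = (⟨0, hk0⟩ : Fin k)
      · rw [if_pos h2, if_pos ⟨by rw [h], by rw [h2]⟩]
        exact enat_le_one le_rfl
      · rw [if_neg h2, if_neg (gT_ne_gR),
          if_neg (fun hc => h2 (Fin.ext (by simpa using hc.2)))]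
        exact enat_le_zero rfl
    · rw [if_neg h, if_neg (gR_ne_gT),
        if_neg (fun hc => h (Fin.ext (by simpa using hc.1)))]
      exact enat_le_zero rfl
  · rw [capB_ts hk0]; simp [moveFlow]
  · rw [capB_tr hk0]; simp [moveFlow]
  · rw [capB_tt hk0]
    simp only [moveFlow, if_neg (gT_ne_gR (j := p)), gT_inj]
    by_cases h : p = q
    · subst h; rw [if_pos rfl, if_pos ⟨rfl, by omega⟩]; exact le_top
    · rw [if_neg h, if_neg (by tauto)]; exact enat_le_zero rfl

lemma resp_b_capB {i : ℕ} (hik : i + 1 < k) {c : GSt k → ℕ}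
    (hs : c (gS k) = 0) (hlo : CRlo i c) (hhi : CRhi i c) (ht : CT i c) :
    RespectsCap (bFlow i c) (capB k (i+1)) := by
  have hik' : i < k := by omega
  rintro ⟨p, q⟩
  rcases p with ⟨⟩ | p | p <;> rcases q with ⟨⟩ | q | q <;> simp only [cS, cR, cT] <;>
    simp only [bFlow, gRn_eq hik, gTn_eq hik', gTn_eq hik]
  · rw [capB_ss hik, if_neg (gS_ne_gT (j := ⟨i, hik'⟩)),
      if_neg (gS_ne_gR (j := ⟨i+1, hik⟩)), if_pos trivial, if_neg (Nat.succ_ne_zero i)]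
    exact enat_le_zero hs
  · rw [capB_sr hik, if_neg (gS_ne_gT (j := ⟨i, hik'⟩)),
      if_neg (gS_ne_gR (j := ⟨i+1, hik⟩)), if_neg (gS_ne_gR (j := q))]
    exact enat_le_zero rfl
  · rw [capB_st hik, if_neg (gS_ne_gT (j := ⟨i, hik'⟩)),
      if_neg (gS_ne_gR (j := ⟨i+1, hik⟩)), if_neg (gS_ne_gT (j := q))]
    exact enat_le_zero rfl
  · rw [capB_rs hik, if_neg (gR_ne_gT (j := p))]
    by_cases h : p = (⟨i+1, hik⟩ : Fin k)
    · rw [if_pos (by rw [h]), if_neg (gS_ne_gT (j := ⟨i+1, hik⟩))]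
      exact enat_le_zero rfl
    · rw [if_neg (by simpa using h), if_neg (gR_ne_gS)]
      exact enat_le_zero rfl
  · rw [capB_rr hik, if_neg (gR_ne_gT (j := p))]
    by_cases h : p = (⟨i+1, hik⟩ : Fin k)
    · rw [if_pos (by rw [h]), if_neg (gR_ne_gT (j := q)),
        if_neg (by rintro ⟨h1', h2'⟩; rw [h] at h2'; simp at h2')]
      exact enat_le_zero rfl
    · rw [if_neg (by simpa using h)]
      by_cases h2 : p = q
      · subst h2
        rw [if_pos rfl]
        by_cases h3 : i + 1 < (p : ℕ)
        · rw [if_pos ⟨rfl, h3⟩]; exact enat_le_one (hhi p (by omega))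
        · rw [if_neg (by tauto)]
          exact enat_le_zero (hlo p (by
            have : (p : ℕ) ≠ i + 1 := fun hc => h (Fin.ext hc)
            omega))
      · rw [if_neg (by simpa using h2), if_neg (by tauto)]; exact enat_le_zero rfl
  · rw [capB_rt hik, if_neg (gR_ne_gT (j := p))]
    by_cases h : p = (⟨i+1, hik⟩ : Fin k)
    · rw [if_pos (by rw [h])]
      by_cases h2 : q = (⟨i+1, hik⟩ : Fin k)
      · rw [if_pos (by rw [h2]), if_pos ⟨by rw [h], by rw [h2]⟩, h]
        exact enat_le_one (hhi _ (by simp))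
      · rw [if_neg (by simpa using h2),
          if_neg (fun hc => h2 (Fin.ext (by simpa using hc.2)))]
        exact enat_le_zero rfl
    · rw [if_neg (by simpa using h), if_neg (gR_ne_gT),
        if_neg (fun hc => h (Fin.ext (by simpa using hc.1)))]
      exact enat_le_zero rfl
  · rw [capB_ts hik]
    by_cases h : p = (⟨i, hik'⟩ : Fin k)
    · rw [if_pos (by rw [h]), if_pos trivial,
        if_pos ⟨Nat.succ_ne_zero i, by rw [h]; simp⟩]
      exact le_top
    · rw [if_neg (by simpa using h), if_neg (gT_ne_gR (j' := ⟨i+1, hik⟩)),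
        if_neg (gT_ne_gS),
        if_neg (by rintro ⟨-, h2'⟩; exact h (Fin.ext (by simp; omega)))]
      exact enat_le_zero rfl
  · rw [capB_tr hik]
    by_cases h : p = (⟨i, hik'⟩ : Fin k)
    · rw [if_pos (by rw [h]), if_neg (gR_ne_gS (j := q))]
      exact enat_le_zero rfl
    · rw [if_neg (by simpa using h), if_neg (gT_ne_gR (j' := ⟨i+1, hik⟩)),
        if_neg (gT_ne_gR)]
      exact enat_le_zero rfl
  · rw [capB_tt hik]
    by_cases h : p = (⟨i, hik'⟩ : Fin k)
    · rw [if_pos (by rw [h]), if_neg (gT_ne_gS (j := q)),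
        if_neg (by rintro ⟨h1', h2'⟩; cases h1'; rw [h] at h2'; simp at h2')]
      exact enat_le_zero rfl
    · rw [if_neg (by simpa using h), if_neg (gT_ne_gR (j' := ⟨i+1, hik⟩))]
      by_cases h2 : p = q
      · subst h2
        rw [if_pos rfl]
        by_cases h3 : i + 1 ≤ (p : ℕ)
        · rw [if_pos ⟨rfl, h3⟩]; exact le_top
        · rw [if_neg (by tauto)]
          exact enat_le_zero (ht p (by
            have : (p : ℕ) ≠ i := fun hc => h (Fin.ext hc)
            omega))
      · rw [if_neg (by simpa using h2), if_neg (by tauto)]; exact enat_le_zero rfl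


lemma goesTo_append : ∀ {fs gs : List (GSt k × GSt k → ℕ)} {c c₁ c₂ : GSt k → ℕ},
    GoesTo fs c c₁ → GoesTo gs c₁ c₂ → GoesTo (fs ++ gs) c c₂ := by
  intro fs
  induction fs with
  | nil =>
    intro gs c c₁ c₂ h1 h2
    cases h1
    simpa using h2
  | cons f fs ih =>
    intro gs c c₁ c₂ h1 h2
    cases h1 with
    | cons hpre hpost htail => exact GoesTo.cons hpre hpost (ih htail h2)

lemma repLemma {n i : ℕ} (hik : i < k)
    (act : ∀ c : GSt k → ℕ, CRlo i c → CRhi i c → CT i c → 1 ≤ c (gS k) →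
      c (gS k) ≤ n - (k - i) + 1 →
      ∃ fs, List.Forall₂ RespectsCap fs (gadgetWord k n i) ∧
        GoesTo fs c (moveCfg (gS k) (gTn k i) c))
    (idl : ∀ c : GSt k → ℕ, CRlo i c → CRhi i c → CT i c → c (gS k) = 0 →
      ∃ fs, List.Forall₂ RespectsCap fs (gadgetWord k n i) ∧ GoesTo fs c c) :
    ∀ (m : ℕ) (c : GSt k → ℕ), CRlo i c → CRhi i c → CT i c → c (gS k) ≤ m →
      c (gS k) ≤ n - (k - i) + 1 →
      ∃ fs, List.Forall₂ RespectsCap fs (List.replicate m (gadgetWord k n i)).flatten ∧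
        GoesTo fs c (fun z => if z = gS k then 0
          else if z = gTn k i then c (gTn k i) + c (gS k) else c z) := by
  intro m
  induction m with
  | zero =>
    intro c hlo hhi ht hm hb
    have hc0 : c (gS k) = 0 := by omega
    have hEq : (fun z => if z = gS k then 0
        else if z = gTn k i then c (gTn k i) + c (gS k) else c z) = c := by
      funext z
      split_ifs with h1 h2
      · rw [h1, hc0]
      · rw [h2, hc0, Nat.add_zero]
      · rfl
    rw [hEq]
    exact ⟨[], by simp, GoesTo.nil c⟩
  | succ m ih =>
    intro c hlo hhi ht hm hb
    rw [List.replicate_succ, List.flatten_cons]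
    by_cases hc0 : c (gS k) = 0
    · obtain ⟨fs1, hr1, hg1⟩ := idl c hlo hhi ht hc0
      obtain ⟨fs2, hr2, hg2⟩ := ih c hlo hhi ht (by omega) hb
      exact ⟨fs1 ++ fs2, List.rel_append hr1 hr2, goesTo_append hg1 hg2⟩
    · obtain ⟨fs1, hr1, hg1⟩ := act c hlo hhi ht (by omega) hb
      set c' := moveCfg (gS k) (gTn k i) c with hc'
      have hS : c' (gS k) = c (gS k) - 1 := by simp [moveCfg, hc']
      have hT : c' (gTn k i) = c (gTn k i) + 1 := by
        simp [moveCfg, hc', gTn_eq hik]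
      have hRv : ∀ j : Fin k, c' (gR j) = c (gR j) := by
        intro j; simp [moveCfg, hc', gTn_eq hik]
      have hTv : ∀ j : Fin k, (j : ℕ) ≠ i → c' (gT j) = c (gT j) := by
        intro j hj
        simp [moveCfg, hc', gTn_eq hik, Fin.ext_iff, hj]
      obtain ⟨fs2, hr2, hg2⟩ := ih c'
        (fun j hj => (hRv j).trans (hlo j hj))
        (fun j hj => (hRv j).le.trans (hhi j hj))
        (fun j hj => (hTv j (by omega)).trans (ht j hj))
        (by omega) (by omega)
      have hEq : (fun z => if z = gS k then 0
            else if z = gTn k i then c' (gTn k i) + c' (gS k) else c' z)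
          = (fun z => if z = gS k then 0
            else if z = gTn k i then c (gTn k i) + c (gS k) else c z) := by
        funext z
        split_ifs with h1 h2
        · rfl
        · rw [hT, hS]; omega
        · show c' z = c z
          rcases z with ⟨⟩ | j | j
          · exact absurd (cS _) h1
          · rw [cR]; exact hRv j
          · rw [cT]
            refine hTv j (fun hji => h2 ?_)
            rw [cT, gTn_eq hik]
            exact congrArg gT (Fin.ext (by simpa using hji))
      exact ⟨fs1 ++ fs2, List.rel_append hr1 hr2,
        hEq ▸ goesTo_append hg1 hg2⟩


lemma mainLemma (n : ℕ) : ∀ i : ℕ, i < k →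
    (∀ c : GSt k → ℕ, CRlo i c → CRhi i c → CT i c → 1 ≤ c (gS k) →
      c (gS k) ≤ n - (k - i) + 1 →
      ∃ fs, List.Forall₂ RespectsCap fs (gadgetWord k n i) ∧
        GoesTo fs c (moveCfg (gS k) (gTn k i) c)) ∧
    (∀ c : GSt k → ℕ, CRlo i c → CRhi i c → CT i c → c (gS k) = 0 →
      ∃ fs, List.Forall₂ RespectsCap fs (gadgetWord k n i) ∧ GoesTo fs c c) := by
  intro i
  induction i with
  | zero =>
    intro hk0
    constructor
    · intro c hlo hhi ht hc1 _
      have hSR : gS k ≠ gRn k 0 := by rw [gRn_eq hk0]; exact gS_ne_gR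
      have hRT : gRn k 0 ≠ gTn k 0 := by rw [gRn_eq hk0, gTn_eq hk0]; exact gR_ne_gT
      set c1 := moveCfg (gS k) (gRn k 0) c with hc1def
      have e1 : c1 (gS k) = c (gS k) - 1 := by simp [moveCfg, hc1def]
      have e2 : c1 (gRn k 0) = c (gRn k 0) + 1 := by
        simp [moveCfg, hc1def, gRn_eq hk0]
      have e3 : ∀ j : Fin k, (j : ℕ) ≠ 0 → c1 (gR j) = c (gR j) := by
        intro j hj; simp [moveCfg, hc1def, gRn_eq hk0, Fin.ext_iff, hj]
      have e4 : ∀ j : Fin k, c1 (gT j) = c (gT j) := by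
        intro j; simp [moveCfg, hc1def, gRn_eq hk0]
      have hr0 : c1 (gRn k 0) ≤ 1 := by
        rw [e2, gRn_eq hk0, hlo ⟨0, hk0⟩ (by simp)]
      have hhi1 : CRhi 0 c1 := by
        intro j hj
        rw [e3 j (by omega)]; exact hhi j hj
      have hc1ge : 1 ≤ c1 (gRn k 0) := by omega
      have hEq : moveCfg (gS k) (gTn k 0) c = moveCfg (gRn k 0) (gTn k 0) c1 := by
        funext z
        rcases z with ⟨⟩ | j | j <;>
          simp only [cS, cR, cT, moveCfg, gTn_eq hk0, gRn_eq hk0,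
            gT_inj, gR_inj, gT_ne_gS, gR_ne_gS, gS_ne_gT, gS_ne_gR, gT_ne_gR, gR_ne_gT,
            Fin.ext_iff, ite_true, ite_false, if_true, if_false, eq_self_iff_true,
            ne_eq, not_false_eq_true, Fin.val_mk]
        · exact e1.symm
        · by_cases hj : (j : ℕ) = 0
          · have hj' : j = ⟨0, hk0⟩ := Fin.ext (by simpa using hj)
            rw [if_pos hj, hj']
            have h2 := e2; rw [gRn_eq hk0] at h2
            omega
          · rw [if_neg hj]; exact (e3 j hj).symm
        · by_cases hj : (j : ℕ) = 0
          · rw [if_pos hj, if_pos hj, e4]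
          · rw [if_neg hj, if_neg hj]; exact (e4 j).symm
      refine ⟨[moveFlow (gS k) (gRn k 0) c, moveFlow (gRn k 0) (gTn k 0) c1], ?_, ?_⟩
      · exact List.Forall₂.cons (resp_move_capA hk0 hlo hhi ht)
          (List.Forall₂.cons (resp_move0_capB hk0 hhi1 hr0) List.Forall₂.nil)
      · exact GoesTo.cons (pre_move hSR c hc1).symm (post_move hSR c).symm
          (GoesTo.cons (pre_move hRT c1 hc1ge).symm
            (hEq.trans (post_move hRT c1).symm) (GoesTo.nil _))
    · intro c hlo hhi ht hc0
      refine ⟨[diagFlow c, diagFlow c], ?_, ?_⟩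
      · exact List.Forall₂.cons (resp_diag_capA hk0 hlo hhi ht)
          (List.Forall₂.cons (resp_diag_capB hk0 (Or.inl rfl) hlo hhi ht) List.Forall₂.nil)
      · exact GoesTo.cons (pre_diag c).symm (post_diag c).symm
          (GoesTo.cons (pre_diag c).symm (post_diag c).symm (GoesTo.nil c))
  | succ i ih =>
    intro hik
    have hik' : i < k := by omega
    obtain ⟨actI, idlI⟩ := ih hik'
    have weakRlo : ∀ c : GSt k → ℕ, CRlo (i+1) c → CRlo i c := by
      intro c h j hj; exact h j (by omega)
    have weakT : ∀ c : GSt k → ℕ, CT (i+1) c → CT i c := by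
      intro c h j hj; exact h j (by omega)
    have weakRhi : ∀ c : GSt k → ℕ, CRlo (i+1) c → CRhi (i+1) c → CRhi i c := by
      intro c h1 h2 j hj
      rcases Nat.lt_or_ge (i+1) (j : ℕ) with h | h
      · exact h2 j h
      · rw [h1 j (by omega)]; omega
    constructor
    · intro c hlo hhi ht hc1 hb
      have hSR : gS k ≠ gRn k (i+1) := by rw [gRn_eq hik]; exact gS_ne_gR
      set c1 := moveCfg (gS k) (gRn k (i+1)) c with hc1def
      have e1 : c1 (gS k) = c (gS k) - 1 := by simp [moveCfg, hc1def]
      have e2 : c1 (gR ⟨i+1, hik⟩) = 1 := by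
        have h0 : c (gR ⟨i+1, hik⟩) = 0 := hlo ⟨i+1, hik⟩ (by simp)
        simp [moveCfg, hc1def, gRn_eq hik, h0]
      have e3 : ∀ j : Fin k, (j : ℕ) ≠ i + 1 → c1 (gR j) = c (gR j) := by
        intro j hj; simp [moveCfg, hc1def, gRn_eq hik, Fin.ext_iff, hj]
      have e4 : ∀ j : Fin k, c1 (gT j) = c (gT j) := by
        intro j; simp [moveCfg, hc1def, gRn_eq hik]
      have hlo1 : CRlo i c1 := by
        intro j hj
        rw [e3 j (by omega)]; exact hlo j (by omega)
      have hhi1 : CRhi i c1 := by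
        intro j hj
        by_cases hj2 : (j : ℕ) = i + 1
        · rw [show j = (⟨i+1, hik⟩ : Fin k) from Fin.ext (by simpa using hj2), e2]
        · rw [e3 j hj2]; exact weakRhi c hlo hhi j hj
      have ht1 : CT i c1 := by
        intro j hj
        rw [e4 j]; exact ht j (by omega)
      obtain ⟨fs2, hr2, hg2⟩ := repLemma hik' actI idlI (n - (k - 1 - i)) c1
        hlo1 hhi1 ht1 (by omega) (by omega)
      set c2 : GSt k → ℕ := fun z => if z = gS k then 0
        else if z = gTn k i then c1 (gTn k i) + c1 (gS k) else c1 z with hc2def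
      have f1 : c2 (gS k) = 0 := by simp [hc2def]
      have f2 : ∀ j : Fin k, c2 (gR j) = c1 (gR j) := by
        intro j; simp [hc2def, gTn_eq hik']
      have f3 : c2 (gT ⟨i, hik'⟩) = c (gT ⟨i, hik'⟩) + (c (gS k) - 1) := by
        have h4 := e4 ⟨i, hik'⟩
        simp [hc2def, gTn_eq hik', e1, h4]
      have f4 : ∀ j : Fin k, (j : ℕ) ≠ i → c2 (gT j) = c (gT j) := by
        intro j hj
        simp [hc2def, gTn_eq hik', Fin.ext_iff, hj, e4]
      have hlo2 : CRlo i c2 := fun j hj => (f2 j).trans (hlo1 j hj)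
      have hhi2 : CRhi i c2 := fun j hj => (f2 j).le.trans (hhi1 j hj)
      have ht2 : CT i c2 := fun j hj => (f4 j (by omega)).trans (ht j (by omega))
      have hEq : moveCfg (gS k) (gTn k (i+1)) c = bCfg i c2 := by
        funext z
        rcases z with ⟨⟩ | j | j <;>
          simp only [cS, cR, cT, moveCfg, bCfg, gTn_eq hik, gTn_eq hik', gRn_eq hik,
            gT_inj, gR_inj, gT_ne_gS, gR_ne_gS, gS_ne_gT, gS_ne_gR, gT_ne_gR, gR_ne_gT,
            Fin.ext_iff, ite_true, ite_false, if_true, if_false, false_or, or_false,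
            or_self, eq_self_iff_true, add_zero, zero_add, ne_eq, not_false_eq_true,
            if_neg, Fin.val_mk]
        · have h5 := ht ⟨i, hik'⟩ (by simp)
          omega
        · by_cases hj : (j : ℕ) = i + 1
          · rw [if_pos hj]; exact hlo j (by omega)
          · rw [if_neg hj, f2 j, e3 j hj]
        · by_cases hj : (j : ℕ) = i + 1
          · have hj' : j = ⟨i+1, hik⟩ := Fin.ext (by simpa using hj)
            rw [if_pos hj, if_pos hj, if_neg (by omega), ← hj', f2 j, f4 j (by omega)]
            rw [hj', e2]
            omega
          · rw [if_neg hj, if_neg hj, zero_add]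
            by_cases hj2 : (j : ℕ) = i
            · rw [if_pos hj2]; exact ht j (by omega)
            · rw [if_neg hj2]; exact (f4 j hj2).symm
      refine ⟨moveFlow (gS k) (gRn k (i+1)) c :: (fs2 ++ [bFlow i c2]), ?_, ?_⟩
      · show List.Forall₂ _ _ (capA k (i+1) ::
          ((List.replicate (n - (k - 1 - i)) (gadgetWord k n i)).flatten ++ [capB k (i+1)]))
        exact List.Forall₂.cons (resp_move_capA hik hlo hhi ht)
          (List.rel_append hr2 (List.Forall₂.cons
            (resp_b_capB hik f1 hlo2 hhi2 ht2) List.Forall₂.nil))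
      · exact GoesTo.cons (pre_move hSR c hc1).symm (post_move hSR c).symm
          (goesTo_append hg2 (GoesTo.cons (pre_b hik c2).symm
            (hEq.trans (post_b hik c2).symm) (GoesTo.nil _)))
    · intro c hlo hhi ht hc0
      obtain ⟨fs2, hr2, hg2⟩ := repLemma hik' actI idlI (n - (k - 1 - i)) c
        (weakRlo c hlo) (weakRhi c hlo hhi) (weakT c ht) (by omega) (by omega)
      have hEq : (fun z => if z = gS k then 0
          else if z = gTn k i then c (gTn k i) + c (gS k) else c z) = c := by
        funext z
        split_ifs with h1 h2
        · rw [h1, hc0]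
        · rw [h2, hc0, Nat.add_zero]
        · rfl
      rw [hEq] at hg2
      refine ⟨diagFlow c :: (fs2 ++ [diagFlow c]), ?_, ?_⟩
      · show List.Forall₂ _ _ (capA k (i+1) ::
          ((List.replicate (n - (k - 1 - i)) (gadgetWord k n i)).flatten ++ [capB k (i+1)]))
        exact List.Forall₂.cons (resp_diag_capA hik hlo hhi ht)
          (List.rel_append hr2 (List.Forall₂.cons
            (resp_diag_capB hik (Or.inr hc0) hlo hhi ht) List.Forall₂.nil))
      · exact GoesTo.cons (pre_diag c).symm (post_diag c).symm
          (goesTo_append hg2 (GoesTo.cons (pre_diag c).symm (post_diag c).symm (GoesTo.nil c)))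


lemma wordOk (n : ℕ) : ∀ i : ℕ, i < k →
    ∀ x ∈ gadgetWord k n i, ∃ j < k, x = capA k j ∨ x = capB k j := by
  intro i
  induction i with
  | zero =>
    intro hk0 x hx
    simp only [gadgetWord, List.mem_cons, List.not_mem_nil, or_false] at hx
    rcases hx with h | h
    · exact ⟨0, hk0, Or.inl h⟩
    · exact ⟨0, hk0, Or.inr h⟩
  | succ i ih =>
    intro hik x hx
    simp only [gadgetWord, List.mem_cons, List.mem_append, List.mem_flatten,
      List.mem_replicate, List.not_mem_nil, or_false] at hx
    rcases hx with (h | ⟨l, ⟨-, rfl⟩, hxl⟩) | h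
    · exact ⟨i+1, hik, Or.inl h⟩
    · exact ih (by omega) x hxl
    · exact ⟨i+1, hik, Or.inr h⟩

lemma chain (hk : 0 < k) (n : ℕ) : ∀ m : ℕ, m ≤ n →
    ∃ (w : List (GSt k × GSt k → ℕ∞)) (fs : List (GSt k × GSt k → ℕ)),
      (∀ x ∈ w, ∃ i < k, x = capA k i ∨ x = capB k i) ∧
      List.Forall₂ RespectsCap fs w ∧
      GoesTo fs (fun z => if z = gS k then m else if z = gTn k (k-1) then n - m else 0)
        (fun z => if z = gS k then 0 else if z = gTn k (k-1) then n else 0) := by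
  have hk1 : k - 1 < k := by omega
  intro m
  induction m with
  | zero =>
    intro _
    exact ⟨[], [], by simp, List.Forall₂.nil, GoesTo.nil _⟩
  | succ m ih =>
    intro hmn
    obtain ⟨w', fs', hw', hr', hg'⟩ := ih (by omega)
    set c : GSt k → ℕ := fun z => if z = gS k then m + 1
      else if z = gTn k (k-1) then n - (m+1) else 0 with hcdef
    have hlo : CRlo (k-1) c := by
      intro j hj; simp [hcdef, gTn_eq hk1]
    have hhi : CRhi (k-1) c := by
      intro j hj; simp [hcdef, gTn_eq hk1]
    have ht : CT (k-1) c := by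
      intro j hj
      have hne : j ≠ (⟨k-1, hk1⟩ : Fin k) := by
        intro h; rw [h] at hj; simp at hj
      simp [hcdef, gTn_eq hk1, hne]
    obtain ⟨fs1, hr1, hg1⟩ := (mainLemma (k := k) (m+1) (k-1) hk1).1 c hlo hhi ht
      (by simp [hcdef]) (by simp only [hcdef, if_pos rfl]; omega)
    have hEq : moveCfg (gS k) (gTn k (k-1)) c
        = (fun z => if z = gS k then m else if z = gTn k (k-1) then n - m else 0) := by
      funext z
      by_cases h1 : z = gS k
      · simp [moveCfg, hcdef, h1]
      · by_cases h2 : z = gTn k (k-1)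
        · have h3 : ¬ gTn k (k-1) = gS k := by rw [gTn_eq hk1]; exact gT_ne_gS
          simp only [moveCfg, hcdef, h1, h2, if_false, if_true, if_neg h3, if_pos rfl,
            ite_true, ite_false]
          omega
        · simp [moveCfg, hcdef, h1, h2]
    refine ⟨gadgetWord k (m+1) (k-1) ++ w', fs1 ++ fs', ?_, List.rel_append hr1 hr', ?_⟩
    · intro x hx
      rcases List.mem_append.mp hx with h | h
      · exact wordOk (m+1) (k-1) hk1 x h
      · exact hw' x h
    · exact goesTo_append (hEq ▸ hg1) hg'

end S12

/-- In the gadget `G_k`: for every `n` some capacity word over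
`{a₁,b₁,…,a_k,b_k}` admits a flow word taking `n·s` to `n·t_k`; moreover (for
`n ≥ 1`) the explicit word `gadgetWord k n (k-1)` admits a flow word taking
`n·s` to `(n-1)·s + t_k`. -/
theorem stmt_12 (k : ℕ) (hk : 0 < k) (n : ℕ) :
    (∃ (w : List (GSt k × GSt k → ℕ∞)) (fs : List (GSt k × GSt k → ℕ)),
      (∀ c ∈ w, ∃ i < k, c = capA k i ∨ c = capB k i) ∧
      List.Forall₂ RespectsCap fs w ∧
      GoesTo fs (fun x => if x = gS k then n else 0)
        (fun x => if x = gTn k (k - 1) then n else 0)) ∧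
    (1 ≤ n →
      ∃ fs : List (GSt k × GSt k → ℕ),
        List.Forall₂ RespectsCap fs (gadgetWord k n (k - 1)) ∧
        GoesTo fs (fun x => if x = gS k then n else 0)
          (fun x => if x = gS k then n - 1 else if x = gTn k (k - 1) then 1 else 0)) := by
  constructor
  · obtain ⟨w, fs, hw, hr, hg⟩ := S12.chain hk n n le_rfl
    have hk1 : k - 1 < k := by omega
    refine ⟨w, fs, hw, hr, ?_⟩
    have h1 : (fun z : GSt k => if z = gS k then n else if z = gTn k (k-1) then n - n else 0)
        = (fun x : GSt k => if x = gS k then n else 0) := by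
      funext z
      by_cases a : z = gS k
      · rw [if_pos a, if_pos a]
      · rw [if_neg a, if_neg a]
        split_ifs <;> omega
    have h2 : (fun z : GSt k => if z = gS k then 0 else if z = gTn k (k-1) then n else 0)
        = (fun x : GSt k => if x = gTn k (k-1) then n else 0) := by
      funext z
      by_cases a : z = gS k
      · rw [if_pos a, if_neg (by rw [a, S12.gTn_eq hk1]; exact S12.gS_ne_gT)]
      · rw [if_neg a]
    rw [h1, h2] at hg
    exact hg
  · intro hn
    have hk1 : k - 1 < k := by omega
    set c : GSt k → ℕ := fun x => if x = gS k then n else 0 with hcdef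
    have hlo : S12.CRlo (k-1) c := by
      intro j hj; simp [hcdef]
    have hhi : S12.CRhi (k-1) c := by
      intro j hj; simp [hcdef]
    have ht : S12.CT (k-1) c := by
      intro j hj; simp [hcdef]
    obtain ⟨fs, hr, hg⟩ := (S12.mainLemma (k := k) n (k-1) hk1).1 c hlo hhi ht
      (by simp [hcdef]; omega) (by simp only [hcdef, if_pos rfl]; omega)
    have hEq : S12.moveCfg (gS k) (gTn k (k-1)) c
        = (fun x => if x = gS k then n - 1 else if x = gTn k (k-1) then 1 else 0) := by
      have h3 : ¬ gTn k (k-1) = gS k := by rw [S12.gTn_eq hk1]; exact S12.gT_ne_gS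
      funext z
      by_cases a : z = gS k
      · simp [S12.moveCfg, a, hcdef]
      · by_cases b : z = gTn k (k-1)
        · simp [S12.moveCfg, a, b, hcdef, h3]
        · simp [S12.moveCfg, a, b, hcdef]
    exact ⟨fs, hr, hEq ▸ hg⟩
end

section
/- In the gadget G_k, any successful run must synchronize the intermediate states: if n ≥ k and a flow word f₁...f_N with f_l ≤ w_l, w_l ∈ {a₁,b₁,...,a_k,b_k}, takes n·s to n·t_k, then there exists an index l such that the configuration c_l = pre(f_l) satisfies c_l(r_i) = 1 for all i ∈ {1,...,k}. -/
set_option linter.unusedSectionVars false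

section Basic
variable {k : ℕ}

@[simp] lemma gS_ne_gR (i : Fin k) : gS k ≠ gR i := by simp [gS, gR]
@[simp] lemma gR_ne_gS (i : Fin k) : gR i ≠ gS k := by simp [gS, gR]
@[simp] lemma gS_ne_gT (i : Fin k) : gS k ≠ gT i := by simp [gS, gT]
@[simp] lemma gT_ne_gS (i : Fin k) : gT i ≠ gS k := by simp [gS, gT]
@[simp] lemma gR_ne_gT (i j : Fin k) : gR i ≠ gT j := by simp [gR, gT]
@[simp] lemma gT_ne_gR (i j : Fin k) : gT i ≠ gR j := by simp [gR, gT]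
@[simp] lemma gR_eq_gR {i j : Fin k} : gR i = gR j ↔ i = j := by simp [gR]
@[simp] lemma gT_eq_gT {i j : Fin k} : gT i = gT j ↔ i = j := by simp [gT]

lemma gRn_coe (j : Fin k) : gRn k (j : ℕ) = gR j := by
  simp [gRn, j.isLt]
lemma gTn_coe (j : Fin k) : gTn k (j : ℕ) = gT j := by
  simp [gTn, j.isLt]

-- capA values
variable {i : ℕ}

lemma capA_S_S : capA k i (gS k, gS k) = ⊤ := by simp [capA]

lemma capA_S_R (hi : i < k) (j : Fin k) :
    capA k i (gS k, gR j) = if (j : ℕ) = i then 1 else 0 := by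
  rcases eq_or_ne (j : ℕ) i with h | h
  · simp [capA, gRn, hi, ← h, Fin.ext_iff]
  · simp [capA, gRn, hi, Fin.ext_iff, h]

lemma capA_S_T (j : Fin k) : capA k i (gS k, gT j) = 0 := by
  by_cases h : i < k <;> simp [capA, gRn, h]

lemma capA_R_S (j : Fin k) : capA k i (gR j, gS k) = 0 := by
  simp [capA]

lemma capA_R_R (j j' : Fin k) :
    capA k i (gR j, gR j') = if j = j' ∧ i < (j : ℕ) then 1 else 0 := by
  rcases eq_or_ne j j' with rfl | h
  · by_cases hij : i < (j : ℕ)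
    · simp [capA, hij]
    · simp [capA, hij, gRn]
  · simp [capA, h, gRn]
lemma capA_R_T (j j' : Fin k) : capA k i (gR j, gT j') = 0 := by
  simp [capA, gRn]
lemma capA_T_S (j : Fin k) : capA k i (gT j, gS k) = 0 := by
  simp [capA, gRn]
lemma capA_T_R (j j' : Fin k) : capA k i (gT j, gR j') = 0 := by
  simp [capA, gRn]
lemma capA_T_T (j j' : Fin k) :
    capA k i (gT j, gT j') = if j = j' ∧ i ≤ (j : ℕ) then ⊤ else 0 := by
  rcases eq_or_ne j j' with rfl | h
  · by_cases hij : i ≤ (j : ℕ)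
    · simp [capA, hij]
    · simp [capA, hij, gRn]
  · simp [capA, h, gRn]
end Basic

section CapB
variable {k i : ℕ}

lemma prevT_gS : prevT k 0 = gS k := by simp [prevT]
lemma prevT_pos (hi : i < k) (h0 : 0 < i) : prevT k i = gT ⟨i - 1, by omega⟩ := by
  have h : i ≠ 0 := by omega
  simp [prevT, h, gTn, show i - 1 < k by omega]

lemma capB_S_S (hi : i < k) : capB k i (gS k, gS k) = if i = 0 then ⊤ else 0 := by
  rcases Nat.eq_zero_or_pos i with rfl | h0
  · simp [capB, prevT_gS]
  · have h : i ≠ 0 := by omega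
    simp [capB, prevT_pos hi h0, gRn, hi, h]

lemma capB_S_R (hi : i < k) (j : Fin k) : capB k i (gS k, gR j) = 0 := by
  rcases Nat.eq_zero_or_pos i with rfl | h0
  · simp [capB, prevT_gS, gRn, hi]
  · simp [capB, prevT_pos hi h0, gRn, hi]

lemma capB_S_T (hi : i < k) (j : Fin k) : capB k i (gS k, gT j) = 0 := by
  rcases Nat.eq_zero_or_pos i with rfl | h0
  · simp [capB, prevT_gS, gRn, gTn, hi]
  · simp [capB, prevT_pos hi h0, gRn, gTn, hi]

lemma capB_R_S (hi : i < k) (j : Fin k) : capB k i (gR j, gS k) = 0 := by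
  rcases Nat.eq_zero_or_pos i with rfl | h0
  · simp [capB, prevT_gS, gRn, gTn, hi]
  · simp [capB, prevT_pos hi h0, gRn, gTn, hi]

lemma capB_R_R (hi : i < k) (j j' : Fin k) :
    capB k i (gR j, gR j') = if j = j' ∧ i < (j : ℕ) then 1 else 0 := by
  have h1 : ¬ ((gR j : GSt k) = prevT k i) := by
    rcases Nat.eq_zero_or_pos i with rfl | h0
    · simp [prevT_gS]
    · simp [prevT_pos hi h0]
  rcases eq_or_ne j j' with rfl | h
  · by_cases hij : i < (j : ℕ)
    · simp [capB, hij, h1]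
    · simp [capB, hij, h1, gRn, gTn, hi]
  · simp [capB, h, h1, gRn, gTn, hi, Fin.ext_iff]

lemma capB_R_T (hi : i < k) (j j' : Fin k) :
    capB k i (gR j, gT j') = if (j : ℕ) = i ∧ (j' : ℕ) = i then 1 else 0 := by
  have h1 : ¬ ((gR j : GSt k) = prevT k i) := by
    rcases Nat.eq_zero_or_pos i with rfl | h0
    · simp [prevT_gS]
    · simp [prevT_pos hi h0]
  simp [capB, h1, gRn, gTn, hi, Fin.ext_iff]

lemma capB_T_S (hi : i < k) (j : Fin k) :
    capB k i (gT j, gS k) = if (j : ℕ) + 1 = i then ⊤ else 0 := by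
  have h2 : ((gT j : GSt k) = prevT k i) ↔ (j : ℕ) + 1 = i := by
    rcases Nat.eq_zero_or_pos i with rfl | h0
    · simp [prevT_gS]
    · simp [prevT_pos hi h0, Fin.ext_iff]
      omega
  by_cases hj : (j : ℕ) + 1 = i
  · rw [if_pos hj]
    simp [capB, h2, hj]
  · rw [if_neg hj]
    simp [capB, h2, hj, gRn, gTn, hi]

lemma capB_T_R (hi : i < k) (j j' : Fin k) : capB k i (gT j, gR j') = 0 := by
  simp [capB, gRn, gTn, hi]

lemma capB_T_T (hi : i < k) (j j' : Fin k) :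
    capB k i (gT j, gT j') = if j = j' ∧ i ≤ (j : ℕ) then ⊤ else 0 := by
  have h1 : ¬ ((gT j' : GSt k) = gS k) := by simp
  rcases eq_or_ne j j' with rfl | h
  · by_cases hij : i ≤ (j : ℕ)
    · simp [capB, hij]
    · simp [capB, hij, gRn, gTn, hi]
  · simp [capB, h, gRn, gTn, hi]

end CapB

section Flow
variable {k : ℕ} {f : GSt k × GSt k → ℕ}

lemma flow_zero {w} (h : RespectsCap f w) {e} (he : w e = 0) : f e = 0 := by
  have := h e
  rw [he] at this
  exact_mod_cast nonpos_iff_eq_zero.mp this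

lemma flow_le_one {w} (h : RespectsCap f w) {e} (he : w e = 1) : f e ≤ 1 := by
  have := h e
  rw [he] at this
  exact_mod_cast this

lemma le_pre (q y : GSt k) : f (q, y) ≤ preFlow f q :=
  Finset.single_le_sum (f := fun y => f (q, y)) (fun _ _ => Nat.zero_le _) (Finset.mem_univ y)

lemma le_post (p q : GSt k) : f (p, q) ≤ postFlow f q :=
  Finset.single_le_sum (f := fun p => f (p, q)) (fun _ _ => Nat.zero_le _) (Finset.mem_univ p)

lemma sum_GSt (g : GSt k → ℕ) :
    ∑ q, g q = g (gS k) + ∑ j, g (gR j) + ∑ j, g (gT j) := by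
  rw [Fintype.sum_sum_type, Fintype.sum_sum_type, ← add_assoc]
  rfl

lemma preFlow_expand (q : GSt k) :
    preFlow f q = f (q, gS k) + ∑ j, f (q, gR j) + ∑ j, f (q, gT j) :=
  sum_GSt _

lemma postFlow_expand (q : GSt k) :
    postFlow f q = f (gS k, q) + ∑ j, f (gR j, q) + ∑ j, f (gT j, q) :=
  sum_GSt _

lemma pre_sum_eq_post_sum : ∑ q, preFlow f q = ∑ q, postFlow f q := by
  unfold preFlow postFlow
  rw [Finset.sum_comm]

end Flow

section FlowA
variable {k i : ℕ} {f : GSt k × GSt k → ℕ} (hi : i < k) (hA : RespectsCap f (capA k i))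
include hi hA

lemma preA_R (j : Fin k) : preFlow f (gR j) = f (gR j, gR j) := by
  rw [preFlow_expand, flow_zero hA (capA_R_S j),
    Finset.sum_eq_single j (fun b _ hb => flow_zero hA (by rw [capA_R_R, if_neg]; tauto))
      (fun h => absurd (Finset.mem_univ _) h),
    Finset.sum_eq_zero (fun b _ => flow_zero hA (capA_R_T j b))]
  simp

lemma preA_T (j : Fin k) : preFlow f (gT j) = f (gT j, gT j) := by
  rw [preFlow_expand, flow_zero hA (capA_T_S j),
    Finset.sum_eq_zero (fun b _ => flow_zero hA (capA_T_R j b)),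
    Finset.sum_eq_single j (fun b _ hb => flow_zero hA (by rw [capA_T_T, if_neg]; tauto))
      (fun h => absurd (Finset.mem_univ _) h)]
  simp

lemma preA_R_zero {j : Fin k} (h : (j : ℕ) ≤ i) : preFlow f (gR j) = 0 := by
  rw [preA_R hi hA, flow_zero hA (by rw [capA_R_R, if_neg]; omega)]

lemma preA_T_zero {j : Fin k} (h : (j : ℕ) < i) : preFlow f (gT j) = 0 := by
  rw [preA_T hi hA, flow_zero hA (by rw [capA_T_T, if_neg]; omega)]

lemma postA_R (j : Fin k) : postFlow f (gR j) = f (gS k, gR j) + f (gR j, gR j) := by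
  rw [postFlow_expand,
    Finset.sum_eq_single j (fun b _ hb => flow_zero hA (by rw [capA_R_R, if_neg]; tauto))
      (fun h => absurd (Finset.mem_univ _) h),
    Finset.sum_eq_zero (fun b _ => flow_zero hA (capA_T_R b j))]
  omega

lemma postA_T (j : Fin k) : postFlow f (gT j) = f (gT j, gT j) := by
  rw [postFlow_expand, flow_zero hA (capA_S_T j),
    Finset.sum_eq_zero (fun b _ => flow_zero hA (capA_R_T b j)),
    Finset.sum_eq_single j (fun b _ hb => flow_zero hA (by rw [capA_T_T, if_neg]; tauto))
      (fun h => absurd (Finset.mem_univ _) h)]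
  simp

lemma fA_SR_zero {j : Fin k} (h : (j : ℕ) ≠ i) : f (gS k, gR j) = 0 :=
  flow_zero hA (by rw [capA_S_R hi, if_neg h])

lemma fA_RT_zero (j j' : Fin k) : f (gR j, gT j') = 0 := flow_zero hA (capA_R_T j j')

lemma postA_R_le_one (j : Fin k) : postFlow f (gR j) ≤ 1 := by
  rw [postA_R hi hA]
  rcases lt_trichotomy (j : ℕ) i with h | h | h
  · rw [fA_SR_zero hi hA (by omega),
      flow_zero hA (e := (gR j, gR j)) (by rw [capA_R_R, if_neg]; omega)]
    omega
  · rw [flow_zero hA (e := (gR j, gR j)) (by rw [capA_R_R, if_neg]; omega)]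
    simpa using flow_le_one hA (e := (gS k, gR j)) (by rw [capA_S_R hi, if_pos h])
  · rw [fA_SR_zero hi hA (by omega)]
    simpa using flow_le_one hA (e := (gR j, gR j)) (by rw [capA_R_R, if_pos ⟨rfl, h⟩])

lemma postA_R_zero {j : Fin k} (h : (j : ℕ) < i) : postFlow f (gR j) = 0 := by
  rw [postA_R hi hA, fA_SR_zero hi hA (by omega),
    flow_zero hA (e := (gR j, gR j)) (by rw [capA_R_R, if_neg]; omega)]

end FlowA

section FlowB
variable {k i : ℕ} {f : GSt k × GSt k → ℕ} (hi : i < k) (hB : RespectsCap f (capB k i))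
include hi hB

lemma preB_S_zero (h0 : i ≠ 0) : preFlow f (gS k) = 0 := by
  rw [preFlow_expand, flow_zero hB (by rw [capB_S_S hi, if_neg h0]),
    Finset.sum_eq_zero (fun b _ => flow_zero hB (capB_S_R hi b)),
    Finset.sum_eq_zero (fun b _ => flow_zero hB (capB_S_T hi b))]
  omega

lemma preB_R (j : Fin k) : preFlow f (gR j) = f (gR j, gR j) + f (gR j, gT j) := by
  rw [preFlow_expand, flow_zero hB (capB_R_S hi j),
    Finset.sum_eq_single j (fun b _ hb => flow_zero hB (by rw [capB_R_R hi, if_neg]; tauto))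
      (fun h => absurd (Finset.mem_univ _) h),
    Finset.sum_eq_single j (fun b _ hb =>
      flow_zero hB (by rw [capB_R_T hi, if_neg]; rintro ⟨h1, h2⟩; exact hb (Fin.ext (by omega))))
      (fun h => absurd (Finset.mem_univ _) h)]
  omega

lemma preB_R_zero {j : Fin k} (h : (j : ℕ) < i) : preFlow f (gR j) = 0 := by
  rw [preB_R hi hB, flow_zero hB (by rw [capB_R_R hi, if_neg]; omega),
    flow_zero hB (by rw [capB_R_T hi, if_neg]; omega)]

lemma preB_T (j : Fin k) : preFlow f (gT j) = f (gT j, gS k) + f (gT j, gT j) := by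
  rw [preFlow_expand,
    Finset.sum_eq_zero (fun b _ => flow_zero hB (capB_T_R hi j b)),
    Finset.sum_eq_single j (fun b _ hb => flow_zero hB (by rw [capB_T_T hi, if_neg]; tauto))
      (fun h => absurd (Finset.mem_univ _) h)]
  omega

lemma preB_T_zero {j : Fin k} (h : (j : ℕ) + 1 < i) : preFlow f (gT j) = 0 := by
  rw [preB_T hi hB, flow_zero hB (by rw [capB_T_S hi, if_neg]; omega),
    flow_zero hB (by rw [capB_T_T hi, if_neg]; omega)]

lemma fB_SR_zero (j : Fin k) : f (gS k, gR j) = 0 := flow_zero hB (capB_S_R hi j)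

lemma fB_RT_zero {j : Fin k} (h : (j : ℕ) ≠ i) : f (gR j, gT j) = 0 :=
  flow_zero hB (by rw [capB_R_T hi, if_neg]; omega)

lemma postB_R (j : Fin k) : postFlow f (gR j) = f (gR j, gR j) := by
  rw [postFlow_expand, fB_SR_zero hi hB,
    Finset.sum_eq_single j (fun b _ hb => flow_zero hB (by rw [capB_R_R hi, if_neg]; tauto))
      (fun h => absurd (Finset.mem_univ _) h),
    Finset.sum_eq_zero (fun b _ => flow_zero hB (capB_T_R hi b j))]
  omega

lemma postB_R_le_one (j : Fin k) : postFlow f (gR j) ≤ 1 := by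
  rw [postB_R hi hB]
  by_cases h : i < (j : ℕ)
  · simpa using flow_le_one hB (e := (gR j, gR j)) (by rw [capB_R_R hi, if_pos ⟨rfl, h⟩])
  · rw [flow_zero hB (e := (gR j, gR j)) (by rw [capB_R_R hi, if_neg]; omega)]
    omega

lemma postB_T (j : Fin k) : postFlow f (gT j) = f (gT j, gT j) + f (gR j, gT j) := by
  rw [postFlow_expand, flow_zero hB (capB_S_T hi j),
    Finset.sum_eq_single j (fun b _ hb =>
      flow_zero hB (by rw [capB_R_T hi, if_neg]; rintro ⟨h1, h2⟩; exact hb (Fin.ext (by omega))))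
      (fun h => absurd (Finset.mem_univ _) h),
    Finset.sum_eq_single j (fun b _ hb => flow_zero hB (by rw [capB_T_T hi, if_neg]; tauto))
      (fun h => absurd (Finset.mem_univ _) h)]
  omega

end FlowB

section Step
variable {k : ℕ} {f : GSt k × GSt k → ℕ}

def GoodStep (k : ℕ) (f : GSt k × GSt k → ℕ) : Prop :=
  ∃ i < k, RespectsCap f (capA k i) ∨ RespectsCap f (capB k i)

lemma step_post_R_le_one (h : GoodStep k f) (j : Fin k) : postFlow f (gR j) ≤ 1 := by
  obtain ⟨i, hi, hA | hB⟩ := h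
  · exact postA_R_le_one hi hA j
  · exact postB_R_le_one hi hB j

lemma step_post_R_le (h : GoodStep k f) (j : Fin k) :
    postFlow f (gR j) ≤ preFlow f (gR j) + f (gS k, gR j) := by
  obtain ⟨i, hi, hA | hB⟩ := h
  · rw [postA_R hi hA]
    have := le_pre (f := f) (gR j) (gR j)
    omega
  · rw [postB_R hi hB]
    have := le_pre (f := f) (gR j) (gR j)
    omega

lemma step_pre_R_le (h : GoodStep k f) (j : Fin k) :
    preFlow f (gR j) ≤ postFlow f (gR j) + f (gR j, gT j) := by
  obtain ⟨i, hi, hA | hB⟩ := h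
  · rw [preA_R hi hA]
    have := le_post (f := f) (gR j) (gR j)
    omega
  · rw [preB_R hi hB]
    have := le_post (f := f) (gR j) (gR j)
    omega

lemma step_post_T_le (h : GoodStep k f) (j : Fin k) :
    postFlow f (gT j) ≤ preFlow f (gT j) + f (gR j, gT j) := by
  obtain ⟨i, hi, hA | hB⟩ := h
  · rw [postA_T hi hA]
    have := le_pre (f := f) (gT j) (gT j)
    omega
  · rw [postB_T hi hB]
    have := le_pre (f := f) (gT j) (gT j)
    omega

lemma step_SR_flow (h : GoodStep k f) (j : Fin k) (hf : f (gS k, gR j) ≠ 0) :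
    RespectsCap f (capA k (j : ℕ)) := by
  obtain ⟨i, hi, hA | hB⟩ := h
  · rcases eq_or_ne ((j : ℕ)) i with rfl | hne
    · exact hA
    · exact absurd (fA_SR_zero hi hA hne) hf
  · exact absurd (fB_SR_zero hi hB j) hf

lemma step_RT_flow (h : GoodStep k f) (j : Fin k) (hf : f (gR j, gT j) ≠ 0) :
    RespectsCap f (capB k (j : ℕ)) := by
  obtain ⟨i, hi, hA | hB⟩ := h
  · exact absurd (fA_RT_zero hi hA j j) hf
  · rcases eq_or_ne ((j : ℕ)) i with rfl | hne
    · exact hB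
    · exact absurd (fB_RT_zero hi hB hne) hf

end Step

section Cfg
variable {k : ℕ}

lemma goesTo_cfg {fs : List (GSt k × GSt k → ℕ)} {c0 c1 : GSt k → ℕ}
    (h : GoesTo fs c0 c1) :
    ∃ cfg : ℕ → (GSt k → ℕ), cfg 0 = c0 ∧ cfg fs.length = c1 ∧
      ∀ l (hl : l < fs.length),
        cfg l = preFlow (fs.get ⟨l, hl⟩) ∧ cfg (l + 1) = postFlow (fs.get ⟨l, hl⟩) := by
  induction h with
  | nil c => exact ⟨fun _ => c, rfl, rfl, fun l hl => absurd hl (by simp)⟩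
  | @cons f fs c c₁ c' hpre hpost _ ih =>
    obtain ⟨cfg, h0, h1, h2⟩ := ih
    refine ⟨fun l => match l with | 0 => c | (l + 1) => cfg l, rfl, h1, ?_⟩
    rintro (_ | l) hl
    · exact ⟨hpre, by simpa [h0] using hpost⟩
    · exact h2 l (by simpa using hl)

end Cfg

def Sm {k : ℕ} (c : GSt k → ℕ) (m : ℕ) : Prop :=
  ∀ j : Fin k, m ≤ (j : ℕ) → c (gR j) = 1 ∧ c (gT j) = 0

lemma step_persist {k : ℕ} {f : GSt k × GSt k → ℕ} (hg : GoodStep k f) {m : ℕ} (hm : m < k)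
    (hS : Sm (preFlow f) m) (hflow : f (gR ⟨m, hm⟩, gT ⟨m, hm⟩) = 0) :
    Sm (postFlow f) m := by
  have hRT : ∀ j : Fin k, m ≤ (j : ℕ) → f (gR j, gT j) = 0 := by
    intro j hj
    obtain ⟨i, hi, hA | hB⟩ := hg
    · exact fA_RT_zero hi hA j j
    · rcases eq_or_ne ((j : ℕ)) i with hji | hji
      · have him : i ≤ m := by
          by_contra him
          have := preB_R_zero hi hB (j := ⟨m, hm⟩) (show m < i by omega)
          have := (hS ⟨m, hm⟩ (by simp)).1
          omega
        have : j = ⟨m, hm⟩ := Fin.ext (show (j : ℕ) = m by omega)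
        rw [this]
        exact hflow
      · exact fB_RT_zero hi hB hji
  intro j hj
  have h1 := step_pre_R_le hg j
  have h2 := step_post_R_le_one hg j
  have h3 := step_post_T_le hg j
  have h4 := (hS j hj).1
  have h5 := (hS j hj).2
  rw [hRT j hj] at h1 h3
  omega

section Main
variable {k : ℕ} {F : ℕ → GSt k × GSt k → ℕ} {cfg : ℕ → GSt k → ℕ} {len : ℕ}
  (hcap : ∀ l, l < len → GoodStep k (F l))
  (hpre : ∀ l, l < len → cfg l = preFlow (F l))
  (hpost : ∀ l, l < len → cfg (l + 1) = postFlow (F l))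
include hcap hpre hpost

lemma persist_interval {m : ℕ} (hm : m < k) {a : ℕ} :
    ∀ b, a ≤ b → b ≤ len → Sm (cfg a) m →
      (∀ l, a ≤ l → l < b → F l (gR ⟨m, hm⟩, gT ⟨m, hm⟩) = 0) → Sm (cfg b) m := by
  intro b hab
  induction b, hab using Nat.le_induction with
  | base => exact fun _ h _ => h
  | succ b hab ih =>
    intro hb hS hfl
    have hblen : b < len := by omega
    have := step_persist (hcap b hblen) hm
      (by rw [← hpre b hblen]; exact ih (by omega) hS (fun l h1 h2 => hfl l h1 (by omega)))
      (hfl b hab (by omega))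
    rwa [← hpost b hblen] at this

lemma tzero_interval {j : Fin k} {a : ℕ} :
    ∀ b, a ≤ b → b ≤ len → cfg a (gT j) = 0 →
      (∀ l, a ≤ l → l < b → F l (gR j, gT j) = 0) → cfg b (gT j) = 0 := by
  intro b hab
  induction b, hab using Nat.le_induction with
  | base => exact fun _ h _ => h
  | succ b hab ih =>
    intro hb h0 hfl
    have hblen : b < len := by omega
    have h1 := step_post_T_le (hcap b hblen) j
    rw [← hpre b hblen, ← hpost b hblen, hfl b hab (by omega)] at h1
    have := ih (by omega) h0 (fun l h1 h2 => hfl l h1 (by omega))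
    omega

lemma r_increase {j : Fin k} {a : ℕ} :
    ∀ b, a ≤ b → b ≤ len → cfg a (gR j) = 0 → cfg b (gR j) ≠ 0 →
      ∃ l, a ≤ l ∧ l < b ∧ F l (gS k, gR j) ≠ 0 := by
  intro b hab
  induction b, hab using Nat.le_induction with
  | base => exact fun _ h h' => absurd h h'
  | succ b hab ih =>
    intro hb h0 hb'
    have hblen : b < len := by omega
    by_cases h : cfg b (gR j) = 0
    · refine ⟨b, hab, by omega, ?_⟩
      have h1 := step_post_R_le (hcap b hblen) j
      rw [← hpre b hblen, ← hpost b hblen, h] at h1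
      omega
    · obtain ⟨l, h1, h2, h3⟩ := ih (by omega) h0 h
      exact ⟨l, h1, by omega, h3⟩

lemma t_increase {j : Fin k} {a : ℕ} :
    ∀ b, a ≤ b → b ≤ len → cfg a (gT j) = 0 → cfg b (gT j) ≠ 0 →
      ∃ l, a ≤ l ∧ l < b ∧ F l (gR j, gT j) ≠ 0 := by
  intro b hab
  induction b, hab using Nat.le_induction with
  | base => exact fun _ h h' => absurd h h'
  | succ b hab ih =>
    intro hb h0 hb'
    have hblen : b < len := by omega
    by_cases h : cfg b (gT j) = 0
    · refine ⟨b, hab, by omega, ?_⟩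
      have h1 := step_post_T_le (hcap b hblen) j
      rw [← hpre b hblen, ← hpost b hblen, h] at h1
      omega
    · obtain ⟨l, h1, h2, h3⟩ := ih (by omega) h0 h
      exact ⟨l, h1, by omega, h3⟩

end Main

lemma sum_range_ite (k m : ℕ) :
    (∑ j ∈ Finset.range k, if m ≤ j then 1 else 0) = k - m := by
  induction k with
  | zero => simp
  | succ k ih =>
    rw [Finset.sum_range_succ, ih]
    split <;> omega

def QQ {k : ℕ} (F : ℕ → GSt k × GSt k → ℕ) (cfg : ℕ → GSt k → ℕ) (len m : ℕ)
    (hm : m < k) : Prop :=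
  ∃ M N, M < N ∧ N < len ∧ F N (gR ⟨m, hm⟩, gT ⟨m, hm⟩) ≠ 0 ∧
    (∀ l, M < l → l ≤ N → Sm (cfg l) m) ∧
    (∀ j : Fin k, (j : ℕ) < m → cfg (M + 1) (gR j) = 0 ∧ cfg (M + 1) (gT j) = 0)

section Main2
variable {k n : ℕ} {F : ℕ → GSt k × GSt k → ℕ} {cfg : ℕ → GSt k → ℕ} {len : ℕ}
  (hcap : ∀ l, l < len → GoodStep k (F l))
  (hpre : ∀ l, l < len → cfg l = preFlow (F l))
  (hpost : ∀ l, l < len → cfg (l + 1) = postFlow (F l))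
include hcap hpre hpost

lemma conserve (h0 : ∑ q, cfg 0 q = n) : ∀ l, l ≤ len → ∑ q, cfg l q = n := by
  intro l
  induction l with
  | zero => exact fun _ => h0
  | succ l ih =>
    intro hl
    have hllen : l < len := by omega
    rw [hpost l hllen, ← pre_sum_eq_post_sum, ← hpre l hllen]
    exact ih (by omega)

lemma QQ_base (hk : 0 < k) (h0r : ∀ j : Fin k, cfg 0 (gR j) = 0)
    (h0t : ∀ j : Fin k, cfg 0 (gT j) = 0)
    (hfin : cfg len (gT ⟨k - 1, by omega⟩) ≠ 0) :
    QQ F cfg len (k - 1) (by omega) := by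
  classical
  set jm : Fin k := ⟨k - 1, by omega⟩ with hjmdef
  obtain ⟨l0, hl01, hl02, hl03⟩ :=
    t_increase hcap hpre hpost len (Nat.zero_le _) le_rfl (h0t jm) hfin
  have hPex : ∃ l, l < len ∧ F l (gR jm, gT jm) ≠ 0 := ⟨l0, hl02, hl03⟩
  set N := Nat.find hPex with hNdef
  have hPN := Nat.find_spec hPex
  rw [← hNdef] at hPN
  have hNlen : N < len := hPN.1
  have hflow0 : ∀ l, l < N → F l (gR jm, gT jm) = 0 := by
    intro l hl
    by_contra hc
    exact Nat.find_min hPex hl ⟨by omega, hc⟩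
  have ht0 : ∀ l, l ≤ N → cfg l (gT jm) = 0 := fun l hl =>
    tzero_interval hcap hpre hpost l (Nat.zero_le _) (by omega) (h0t jm)
      (fun t _ ht2 => hflow0 t (by omega))
  have hrN : cfg N (gR jm) ≠ 0 := by
    rw [hpre N hNlen]
    have h1 := le_pre (f := F N) (gR jm) (gT jm)
    have h2 := hPN.2
    omega
  obtain ⟨l1, _, hl12, hl13⟩ :=
    r_increase hcap hpre hpost N (Nat.zero_le _) (by omega) (h0r jm) hrN
  set P' : ℕ → Prop := fun l => F l (gS k, gR jm) ≠ 0 with hP'def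
  have hl1' : l1 ≤ N - 1 := by omega
  set M := Nat.findGreatest P' (N - 1) with hMdef
  have hPM : P' M := Nat.findGreatest_spec hl1' hl13
  have hMle : M ≤ N - 1 := Nat.findGreatest_le _
  have hMN : M < N := by omega
  have hMlen : M < len := by omega
  have hAM : RespectsCap (F M) (capA k (k - 1)) := step_SR_flow (hcap M hMlen) jm hPM
  have hk1 : k - 1 < k := by omega
  have hpostM := hpost M hMlen
  have hr1 : cfg (M + 1) (gR jm) = 1 := by
    have h1 := le_post (f := F M) (gS k) (gR jm)
    have h2 := step_post_R_le_one (hcap M hMlen) jm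
    have h3 : F M (gS k, gR jm) ≠ 0 := hPM
    rw [← hpostM] at h1 h2
    omega
  have hrz : ∀ j : Fin k, (j : ℕ) < k - 1 → cfg (M + 1) (gR j) = 0 := fun j hj => by
    rw [hpostM]
    exact postA_R_zero hk1 hAM hj
  have htz : ∀ j : Fin k, (j : ℕ) < k - 1 → cfg (M + 1) (gT j) = 0 := fun j hj => by
    rw [hpostM]
    have h1 := postA_T hk1 hAM j
    have h2 : preFlow (F M) (gT j) = 0 := preA_T_zero hk1 hAM hj
    have h3 := le_pre (f := F M) (gT j) (gT j)
    omega
  have htm : cfg (M + 1) (gT jm) = 0 := ht0 (M + 1) (by omega)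
  have hSmM1 : Sm (cfg (M + 1)) (k - 1) := by
    intro j hj
    have : j = jm := Fin.ext (show (j : ℕ) = k - 1 by have := j.isLt; omega)
    rw [this]
    exact ⟨hr1, htm⟩
  refine ⟨M, N, hMN, hNlen, hPN.2, ?_, fun j hj => ⟨hrz j hj, htz j hj⟩⟩
  intro l h1 h2
  exact persist_interval hcap hpre hpost hk1 l (by omega) (by omega) hSmM1
    (fun t ht1 ht2 => hflow0 t (by omega))

lemma QQ_step (hn : k ≤ n) (hsum : ∀ l, l ≤ len → ∑ q, cfg l q = n)
    {m : ℕ} (hm : m < k) (h0m : 0 < m) (hq : QQ F cfg len m hm) :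
    QQ F cfg len (m - 1) (by omega) := by
  classical
  obtain ⟨M, N, hMN, hNlen, hflowN, hSmInt, hz⟩ := hq
  set jm : Fin k := ⟨m, hm⟩ with hjmdef
  set jm' : Fin k := ⟨m - 1, by omega⟩ with hjm'def
  have hBN : RespectsCap (F N) (capB k m) := step_RT_flow (hcap N hNlen) jm hflowN
  have hcfgN := hpre N hNlen
  have hs0 : cfg N (gS k) = 0 := by
    rw [hcfgN]
    exact preB_S_zero hm hBN (by omega)
  have hrlt : ∀ j : Fin k, (j : ℕ) < m → cfg N (gR j) = 0 := fun j hj => by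
    rw [hcfgN]
    exact preB_R_zero hm hBN hj
  have htlt : ∀ j : Fin k, (j : ℕ) + 1 < m → cfg N (gT j) = 0 := fun j hj => by
    rw [hcfgN]
    exact preB_T_zero hm hBN hj
  have hSmN : Sm (cfg N) m := hSmInt N hMN le_rfl
  have hsumN := hsum N (by omega)
  rw [sum_GSt] at hsumN
  have hr_sum : ∑ j : Fin k, cfg N (gR j) = k - m := by
    rw [Finset.sum_congr rfl (fun j _ => show cfg N (gR j) = if m ≤ (j : ℕ) then 1 else 0 by
      split
      · exact (hSmN j (by assumption)).1
      · exact hrlt j (by omega))]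
    rw [Fin.sum_univ_eq_sum_range (fun i => if m ≤ i then 1 else 0)]
    exact sum_range_ite k m
  have ht_sum : ∑ j : Fin k, cfg N (gT j) = cfg N (gT jm') := by
    refine Finset.sum_eq_single jm' (fun j _ hj => ?_) (fun h => absurd (Finset.mem_univ _) h)
    rcases le_or_gt m (j : ℕ) with h | h
    · exact (hSmN j h).2
    · refine htlt j ?_
      have : (j : ℕ) ≠ m - 1 := fun hc => hj (Fin.ext (show (j : ℕ) = m - 1 from hc))
      omega
  have htN : cfg N (gT jm') ≠ 0 := by
    rw [hr_sum, ht_sum, hs0] at hsumN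
    omega
  have htM1 : cfg (M + 1) (gT jm') = 0 := (hz jm' (show m - 1 < m by omega)).2
  obtain ⟨l0, hl01, hl02, hl03⟩ :=
    t_increase hcap hpre hpost N (by omega) (by omega) htM1 htN
  have hPex : ∃ l, M + 1 ≤ l ∧ l < N ∧ F l (gR jm', gT jm') ≠ 0 := ⟨l0, hl01, hl02, hl03⟩
  set N' := Nat.find hPex with hN'def
  have hPN' := Nat.find_spec hPex
  rw [← hN'def] at hPN'
  have hN'len : N' < len := by
    have := hPN'.2.1
    omega
  have hflow0 : ∀ l, M + 1 ≤ l → l < N' → F l (gR jm', gT jm') = 0 := by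
    intro l h1 h2
    by_contra hc
    exact Nat.find_min hPex h2 ⟨h1, by have := hPN'.2.1; omega, hc⟩
  have ht0 : ∀ l, M + 1 ≤ l → l ≤ N' → cfg l (gT jm') = 0 := fun l h1 h2 =>
    tzero_interval hcap hpre hpost l h1 (by omega) htM1
      (fun t ht1 ht2 => hflow0 t ht1 (by omega))
  have hrN' : cfg N' (gR jm') ≠ 0 := by
    rw [hpre N' hN'len]
    have h1 := le_pre (f := F N') (gR jm') (gT jm')
    have h2 := hPN'.2.2
    omega
  have hrM1 : cfg (M + 1) (gR jm') = 0 := (hz jm' (show m - 1 < m by omega)).1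
  obtain ⟨l1, hl11, hl12, hl13⟩ :=
    r_increase hcap hpre hpost N' hPN'.1 (by omega) hrM1 hrN'
  set P' : ℕ → Prop := fun l => F l (gS k, gR jm') ≠ 0 with hP'def
  have hl1' : l1 ≤ N' - 1 := by omega
  set M' := Nat.findGreatest P' (N' - 1) with hM'def
  have hPM' : P' M' := Nat.findGreatest_spec hl1' hl13
  have hM'ge : M + 1 ≤ M' := le_trans hl11 (Nat.le_findGreatest hl1' hl13)
  have hM'le : M' ≤ N' - 1 := Nat.findGreatest_le _
  have hM'lt : M' < N' := by omega
  have hM'len : M' < len := by omega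
  have hm1k : m - 1 < k := by omega
  have hAM' : RespectsCap (F M') (capA k (m - 1)) := step_SR_flow (hcap M' hM'len) jm' hPM'
  have hpostM' := hpost M' hM'len
  have hr1 : cfg (M' + 1) (gR jm') = 1 := by
    have h1 := le_post (f := F M') (gS k) (gR jm')
    have h2 := step_post_R_le_one (hcap M' hM'len) jm'
    have h3 : F M' (gS k, gR jm') ≠ 0 := hPM'
    rw [← hpostM'] at h1 h2
    omega
  have hSmM1 : Sm (cfg (M' + 1)) m := hSmInt (M' + 1) (by omega) (by have := hPN'.2.1; omega)
  have hrz : ∀ j : Fin k, (j : ℕ) < m - 1 → cfg (M' + 1) (gR j) = 0 := fun j hj => by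
    rw [hpostM']
    exact postA_R_zero hm1k hAM' hj
  have htz : ∀ j : Fin k, (j : ℕ) < m - 1 → cfg (M' + 1) (gT j) = 0 := fun j hj => by
    rw [hpostM']
    have h1 := postA_T hm1k hAM' j
    have h2 : preFlow (F M') (gT j) = 0 := preA_T_zero hm1k hAM' hj
    have h3 := le_pre (f := F M') (gT j) (gT j)
    omega
  have htm1 : cfg (M' + 1) (gT jm') = 0 := ht0 (M' + 1) (by omega) (by omega)
  have hSm'M1 : Sm (cfg (M' + 1)) (m - 1) := by
    intro j hj
    rcases eq_or_lt_of_le hj with he | hlt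
    · have : j = jm' := Fin.ext (show (j : ℕ) = m - 1 by omega)
      rw [this]
      exact ⟨hr1, htm1⟩
    · exact hSmM1 j (by omega)
  refine ⟨M', N', hM'lt, hN'len, hPN'.2.2, ?_, fun j hj => ⟨hrz j hj, htz j hj⟩⟩
  intro l h1 h2
  exact persist_interval hcap hpre hpost hm1k l (by omega) (by omega) hSm'M1
    (fun t ht1 ht2 => hflow0 t (by omega) (by omega))

lemma QQ_descend (hk : 0 < k) (hn : k ≤ n) (hsum : ∀ l, l ≤ len → ∑ q, cfg l q = n) :
    ∀ m (hm : m < k), QQ F cfg len m hm → QQ F cfg len 0 hk := by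
  intro m
  induction m with
  | zero => exact fun hm h => h
  | succ m ih =>
    intro hm h
    exact ih (by omega) (QQ_step hcap hpre hpost hn hsum hm (by omega) h)

end Main2

/-- Synchronisation in the gadget `G_k`: if `n ≥ k` and a flow word bounded by a
capacity word over `{a₁,b₁,…,a_k,b_k}` takes `n·s` to `n·t_k`, then at some step
`l` the configuration `pre(f_l)` has exactly one token on each `r_i`. -/
theorem stmt_13 (k : ℕ) (hk : 0 < k) (n : ℕ) (hn : k ≤ n)
    (w : List (GSt k × GSt k → ℕ∞)) (fs : List (GSt k × GSt k → ℕ))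
    (hw : ∀ c ∈ w, ∃ i < k, c = capA k i ∨ c = capB k i)
    (hle : List.Forall₂ RespectsCap fs w)
    (hgo : GoesTo fs (fun x => if x = gS k then n else 0)
      (fun x => if x = gTn k (k - 1) then n else 0)) :
    ∃ (l : ℕ) (h : l < fs.length), ∀ i : Fin k, preFlow (fs.get ⟨l, h⟩) (gR i) = 1 := by
  classical
  obtain ⟨cfg, hc0, hc1, hc2⟩ := goesTo_cfg hgo
  set len := fs.length with hlen
  set F : ℕ → GSt k × GSt k → ℕ :=
    fun l => if h : l < len then fs.get ⟨l, h⟩ else (fun _ => 0) with hF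
  have hFeq : ∀ l (h : l < len), F l = fs.get ⟨l, h⟩ := fun l h => by simp [hF, h]
  have hpre : ∀ l, l < len → cfg l = preFlow (F l) := fun l h => by
    rw [hFeq l h]
    exact (hc2 l h).1
  have hpost : ∀ l, l < len → cfg (l + 1) = postFlow (F l) := fun l h => by
    rw [hFeq l h]
    exact (hc2 l h).2
  have hlw : len = w.length := hle.length_eq
  have hcap : ∀ l, l < len → GoodStep k (F l) := by
    intro l h
    have hR : RespectsCap (fs.get ⟨l, h⟩) (w.get ⟨l, by omega⟩) :=
      (List.forall₂_iff_get.mp hle).2 l h (by omega)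
    obtain ⟨i, hik, hcA⟩ := hw (w.get ⟨l, by omega⟩) (w.get_mem _)
    rw [hFeq l h]
    refine ⟨i, hik, ?_⟩
    rcases hcA with h' | h'
    · exact Or.inl (h' ▸ hR)
    · exact Or.inr (h' ▸ hR)
  have hsum0 : ∑ q, cfg 0 q = n := by
    rw [hc0, sum_GSt]
    simp
  have hsum := conserve hcap hpre hpost hsum0
  have hk1 : k - 1 < k := by omega
  have hfin : cfg len (gT ⟨k - 1, hk1⟩) ≠ 0 := by
    rw [hc1]
    have hg : gTn k (k - 1) = gT ⟨k - 1, hk1⟩ := by simp [gTn, hk1]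
    rw [← hg]
    simp
    omega
  have h0r : ∀ j : Fin k, cfg 0 (gR j) = 0 := fun j => by
    rw [hc0]
    simp
  have h0t : ∀ j : Fin k, cfg 0 (gT j) = 0 := fun j => by
    rw [hc0]
    simp
  have hbase := QQ_base hcap hpre hpost hk h0r h0t hfin
  have hq0 := QQ_descend hcap hpre hpost hk hn hsum (k - 1) hk1 hbase
  obtain ⟨M, N, hMN, hNlen, _, hSmInt, _⟩ := hq0
  refine ⟨N, hNlen, fun i => ?_⟩
  have hi := (hSmInt N hMN le_rfl i (Nat.zero_le _)).1
  rw [hpre N hNlen, hFeq N hNlen] at hi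
  exact hi
end
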